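/- Setting ⊢_k := ⊢_{H^{2k−1}} for each k ≥ 1, the sequence ⊢_1 ⊆ ⊢_2 ⊆ ⊢_3 ⊆ … is increasing, and ⊢_{H_mCi} equals the supremum sup_{1 ≤ k < ω} ⊢_k in the complete lattice of standard Tarskian consequence relations on L; i.e., ⊢_{H_mCi} is the least standard Tarskian consequence relation containing ⊢_{H^{2k−1}} for every k ≥ 1. -/
import Mathlib


/-- Formulas over the signature Σ with unary ¬, ∘ and binary ∧, ∨, →,
freely generated from a denumerable set of propositional variables. -/
inductive Fm : Type where
  | var : ℕ → Fm
  | neg : Fm → Fm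
  | circ : Fm → Fm
  | conj : Fm → Fm → Fm
  | disj : Fm → Fm → Fm
  | imp : Fm → Fm → Fm
deriving DecidableEq

/-- Substitutions act homomorphically on formulas. -/
def subst (σ : ℕ → Fm) : Fm → Fm
  | .var n => σ n
  | .neg φ => .neg (subst σ φ)
  | .circ φ => .circ (subst σ φ)
  | .conj φ ψ => .conj (subst σ φ) (subst σ ψ)
  | .disj φ ψ => .disj (subst σ φ) (subst σ ψ)
  | .imp φ ψ => .imp (subst σ φ) (subst σ ψ)

/-- A Set-Fmla rule schema: a finite antecedent and a single succedent formula. -/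
abbrev Rule : Type := Finset Fm × Fm

/-- Derivability in a Set-Fmla Hilbert system: `Derives H Γ φ` holds iff φ can be
obtained from members of Γ by finitely many applications of substitution instances
of rules of `H`. -/
inductive Derives (H : Set Rule) : Set Fm → Fm → Prop where
  | prem : ∀ {Γ : Set Fm} {φ : Fm}, φ ∈ Γ → Derives H Γ φ
  | rule : ∀ {Γ : Set Fm} (r : Rule) (σ : ℕ → Fm), r ∈ H →
      (∀ ψ ∈ r.1, Derives H Γ (subst σ ψ)) → Derives H Γ (subst σ r.2)

/-- One-dimensional Set-Fmla consequence judgements. -/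
abbrev ConsRel : Type := Set Fm → Fm → Prop

/-- A Tarskian consequence relation: reflexivity, monotonicity and cut. -/
def Tarskian (R : ConsRel) : Prop :=
  (∀ (Γ : Set Fm) (φ : Fm), φ ∈ Γ → R Γ φ) ∧
  (∀ (Γ Γ' : Set Fm) (φ : Fm), Γ ⊆ Γ' → R Γ φ → R Γ' φ) ∧
  (∀ (Γ Δ : Set Fm) (φ : Fm), (∀ ψ ∈ Δ, R Γ ψ) → R (Γ ∪ Δ) φ → R Γ φ)

/-- Substitution-invariance. -/
def SubstInvariant (R : ConsRel) : Prop :=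
  ∀ (σ : ℕ → Fm) (Γ : Set Fm) (φ : Fm), R Γ φ → R (subst σ '' Γ) (subst σ φ)

/-- Finitariness. -/
def Finitary (R : ConsRel) : Prop :=
  ∀ (Γ : Set Fm) (φ : Fm), R Γ φ → ∃ Γ' ⊆ Γ, Γ'.Finite ∧ R Γ' φ

/-- Standard = Tarskian + substitution-invariant + finitary. -/
def StandardCR (R : ConsRel) : Prop := Tarskian R ∧ SubstInvariant R ∧ Finitary R

/-- Inclusion of consequence relations. -/
def leCR (R S : ConsRel) : Prop := ∀ (Γ : Set Fm) (φ : Fm), R Γ φ → S Γ φ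

/-- `R` is the supremum of the collection `C` in the complete lattice of standard
Tarskian consequence relations: it is a standard upper bound below every
standard upper bound. -/
def IsSupCR (R : ConsRel) (C : Set ConsRel) : Prop :=
  StandardCR R ∧ (∀ S ∈ C, leCR S R) ∧
  ∀ S : ConsRel, StandardCR S → (∀ T ∈ C, leCR T S) → leCR R S

/-- Iterated negation: `negIter j φ = ¬^j φ`. -/
def negIter : ℕ → Fm → Fm
  | 0, φ => φ
  | n + 1, φ => .neg (negIter n φ)

/-- (Ax10)  p ∨ ¬p. -/
def ax10 : Fm := .disj (.var 0) (.neg (.var 0))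
/-- (bc1)  ∘p → (p → (¬p → q)). -/
def bc1 : Fm := .imp (.circ (.var 0)) (.imp (.var 0) (.imp (.neg (.var 0)) (.var 1)))
/-- (ci)  ¬∘p → (p ∧ ¬p). -/
def ci : Fm := .imp (.neg (.circ (.var 0))) (.conj (.var 0) (.neg (.var 0)))
/-- (ci_j)  ∘¬^j∘p. -/
def cij (j : ℕ) : Fm := .circ (negIter j (.circ (.var 0)))

/-- `HmCi B` : the Hilbert system extending the positive-classical base `B`
with (Ax10), (bc1), (ci) and (ci_j) for every j ≥ 0. -/
def HmCi (B : Set Rule) : Set Rule :=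
  B ∪ {(∅, ax10), (∅, bc1), (∅, ci)} ∪ {r : Rule | ∃ j : ℕ, r = (∅, cij j)}

/-- `HkSys B k` : the Hilbert system extending the positive-classical base `B`
with (Ax10), (bc1), (ci) and (ci_j) for 0 ≤ j ≤ k only. -/
def HkSys (B : Set Rule) (k : ℕ) : Set Rule :=
  B ∪ {(∅, ax10), (∅, bc1), (∅, ci)} ∪ {r : Rule | ∃ j ≤ k, r = (∅, cij j)}

theorem subst_subst (σ τ : ℕ → Fm) (φ : Fm) :
    subst σ (subst τ φ) = subst (fun n => subst σ (τ n)) φ := by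
  induction φ <;> simp [subst, *]

theorem Derives.mono_sys {H H' : Set Rule} (hH : H ⊆ H') {Γ : Set Fm} {φ : Fm}
    (h : Derives H Γ φ) : Derives H' Γ φ := by
  induction h with
  | prem h => exact .prem h
  | rule r σ hr _ ih => exact .rule r σ (hH hr) ih

theorem Derives.mono_ctx {H : Set Rule} {Γ Γ' : Set Fm} (hΓ : Γ ⊆ Γ') {φ : Fm}
    (h : Derives H Γ φ) : Derives H Γ' φ := by
  induction h with
  | prem h => exact .prem (hΓ h)
  | rule r σ hr _ ih => exact .rule r σ hr ih

theorem Derives.cut {H : Set Rule} {Γ Δ : Set Fm} {φ : Fm}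
    (hΔ : ∀ ψ ∈ Δ, Derives H Γ ψ) (h : Derives H (Γ ∪ Δ) φ) : Derives H Γ φ := by
  induction h with
  | prem h => exact h.elim (fun h => .prem h) (fun h => hΔ _ h)
  | rule r σ hr _ ih => exact .rule r σ hr ih

theorem Derives.substInv {H : Set Rule} (σ : ℕ → Fm) {Γ : Set Fm} {φ : Fm}
    (h : Derives H Γ φ) : Derives H (subst σ '' Γ) (subst σ φ) := by
  induction h with
  | prem h => exact .prem ⟨_, h, rfl⟩
  | rule r τ hr _ ih =>
    rw [subst_subst]
    refine .rule r (fun n => subst σ (τ n)) hr (fun ψ hψ => ?_)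
    rw [← subst_subst]; exact ih ψ hψ

theorem Derives.finitary {H : Set Rule} {Γ : Set Fm} {φ : Fm}
    (h : Derives H Γ φ) : ∃ Γ' ⊆ Γ, Γ'.Finite ∧ Derives H Γ' φ := by
  induction h with
  | prem h => exact ⟨{_}, Set.singleton_subset_iff.2 h, Set.finite_singleton _, .prem rfl⟩
  | rule r σ hr _ ih =>
    classical
    choose f hsub hfin hder using ih
    set g : Fm → Set Fm := fun ψ => if h : ψ ∈ r.1 then f ψ h else ∅ with hg
    refine ⟨⋃ ψ ∈ (r.1 : Set Fm), g ψ, ?_, ?_, ?_⟩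
    · refine Set.iUnion₂_subset fun ψ hψ => ?_
      simp only [hg, dif_pos (Finset.mem_coe.1 hψ)]
      exact hsub ψ _
    · exact Set.Finite.biUnion r.1.finite_toSet fun ψ hψ => by
        simp only [hg]; split <;> simp [hfin, Set.finite_empty, *]
    · refine .rule r σ hr fun ψ hψ => ?_
      refine (hder ψ hψ).mono_ctx ?_
      intro x hx
      exact Set.mem_biUnion (Finset.mem_coe.2 hψ) (by simp [hg, dif_pos hψ]; exact hx)

theorem HkSys_subset_HmCi (B : Set Rule) (k : ℕ) : HkSys B k ⊆ HmCi B := by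
  intro r hr
  rcases hr with (h | h) | ⟨j, _, rfl⟩
  · exact Or.inl (Or.inl h)
  · exact Or.inl (Or.inr h)
  · exact Or.inr ⟨j, rfl⟩

theorem HkSys_mono (B : Set Rule) {k k' : ℕ} (h : k ≤ k') : HkSys B k ⊆ HkSys B k' := by
  intro r hr
  rcases hr with (h' | h') | ⟨j, hj, rfl⟩
  · exact Or.inl (Or.inl h')
  · exact Or.inl (Or.inr h')
  · exact Or.inr ⟨j, le_trans hj h, rfl⟩

theorem HmCi_mem_some (B : Set Rule) {r : Rule} (hr : r ∈ HmCi B) :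
    ∃ k : ℕ, 1 ≤ k ∧ r ∈ HkSys B (2 * k - 1) := by
  rcases hr with (h | h) | ⟨j, rfl⟩
  · exact ⟨1, le_refl 1, Or.inl (Or.inl h)⟩
  · exact ⟨1, le_refl 1, Or.inl (Or.inr h)⟩
  · exact ⟨j + 1, by omega, Or.inr ⟨j, by omega, rfl⟩⟩


/-- the sequence ⊢_k := ⊢_{H^{2k−1}} (k ≥ 1) is increasing and
⊢_{H_mCi} is its supremum in the complete lattice of standard Tarskian
consequence relations. -/
theorem stmt2 (B : Set Rule) :
    (∀ k : ℕ, 1 ≤ k →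
      leCR (Derives (HkSys B (2 * k - 1))) (Derives (HkSys B (2 * (k + 1) - 1)))) ∧
    IsSupCR (Derives (HmCi B))
      {S : ConsRel | ∃ k : ℕ, 1 ≤ k ∧ S = Derives (HkSys B (2 * k - 1))} := by
  constructor
  · intro k hk Γ φ h
    exact h.mono_sys (HkSys_mono B (by omega))
  · refine ⟨⟨⟨fun Γ φ h => .prem h,
      fun Γ Γ' φ h hd => hd.mono_ctx h,
      fun Γ Δ φ hΔ hd => hd.cut hΔ⟩,
      fun σ Γ φ h => h.substInv σ,
      fun Γ φ h => h.finitary⟩, ?_, ?_⟩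
    · rintro S ⟨k, hk, rfl⟩ Γ φ h
      exact h.mono_sys (HkSys_subset_HmCi B _)
    · rintro S ⟨⟨hrefl, hmono, hcut⟩, -, -⟩ hub Γ φ h
      induction h with
      | prem h => exact hrefl _ _ h
      | rule r σ hr _ ih =>
        obtain ⟨k, hk, hrk⟩ := HmCi_mem_some B hr
        have hd : Derives (HkSys B (2 * k - 1)) (subst σ '' (r.1 : Set Fm)) (subst σ r.2) :=
          .rule r σ hrk (fun ψ hψ => .prem ⟨ψ, Finset.mem_coe.2 hψ, rfl⟩)
        have hS : S (subst σ '' (r.1 : Set Fm)) (subst σ r.2) :=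
          hub _ ⟨k, hk, rfl⟩ _ _ hd
        refine hcut Γ (subst σ '' (r.1 : Set Fm)) _ ?_
          (hmono _ _ _ Set.subset_union_right hS)
        rintro ψ ⟨ψ', hψ', rfl⟩
        exact ih ψ' (Finset.mem_coe.1 hψ')
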